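/- Let n ≥ 1 and let Z_1, …, Z_n be exchangeable real random variables that are almost surely distinct. For any α ∈ (0, 1], P(Z_n ≤ Z_{(⌈αn⌉, n)}) ≤ α + 1/n, where Z_{(⌈αn⌉, n)} is the ⌈αn⌉-th smallest value among Z_1, …, Z_n. -/

import Mathlib

open MeasureTheory Filter

/-- The `k`-th smallest value (1-indexed) among `v 0, …, v (n-1)`,
counted with multiplicity. -/
noncomputable def kthSmallest {n : ℕ} (v : Fin n → ℝ) (k : ℕ) : ℝ :=
  if h : k - 1 < n then v (Tuple.sort v ⟨k - 1, h⟩) else 0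

/-- Real random variables `Z 0, …, Z (m-1)` are exchangeable if for every
permutation `σ` of the indices, the permuted vector has the same joint law. -/
def Exchangeable {Ω : Type*} [MeasurableSpace Ω] (P : Measure Ω) {m : ℕ}
    (Z : Fin m → Ω → ℝ) : Prop :=
  ∀ σ : Equiv.Perm (Fin m),
    Measure.map (fun ω => fun i => Z (σ i) ω) P = Measure.map (fun ω => fun i => Z i ω) P

/-! By exchangeability, the events `{Z i ≤ Z_(k)}` all have the same probability, because the
`k`-th order statistic is a symmetric function of the sample. Almost surely the `Z i` are distinct,
and then exactly `k` of these events occur; summing over `i` gives `n · P(Z_n ≤ Z_(k)) = k`, and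
`k = ⌈αn⌉ ≤ αn + 1`. -/

lemma measurableSet_setOf_sort_eq {n : ℕ} (σ : Equiv.Perm (Fin n)) :
    MeasurableSet {v : Fin n → ℝ | Tuple.sort v = σ} := by
  simp_rw [eq_comm (a := Tuple.sort _), Tuple.eq_sort_iff, Monotone, Function.comp_apply]
  refine Measurable.setOf (Measurable.and ?_ ?_) <;> fun_prop

lemma measurable_kthSmallest {n : ℕ} (k : ℕ) :
    Measurable fun v : Fin n → ℝ => kthSmallest v k := by
  unfold kthSmallest
  split_ifs with h
  · set j : Fin n := ⟨k - 1, h⟩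
    -- `Tuple.sort` is constant on each of the finitely many measurable cells `{sort w = σ}`.
    have : (fun v : Fin n → ℝ => v (Tuple.sort v j)) =
        fun v => ∑ σ, {w : Fin n → ℝ | Tuple.sort w = σ}.indicator (fun w => w (σ j)) v := by
      funext v
      rw [Finset.sum_eq_single_of_mem (Tuple.sort v) (Finset.mem_univ _)
        fun σ _ hσ => Set.indicator_of_notMem (s := {w | Tuple.sort w = σ}) hσ.symm _]
      simp
    rw [this]
    exact Finset.measurable_sum _ fun σ _ =>
      (measurable_pi_apply _).indicator (measurableSet_setOf_sort_eq σ)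
  · exact measurable_const

lemma kthSmallest_comp_perm {n : ℕ} (v : Fin n → ℝ) (σ : Equiv.Perm (Fin n)) (k : ℕ) :
    kthSmallest (v ∘ σ) k = kthSmallest v k := by
  unfold kthSmallest
  split_ifs with h
  · exact congrFun (Tuple.comp_perm_comp_sort_eq_comp_sort (f := v) (σ := σ)) _
  · rfl

lemma card_filter_le_kthSmallest {n k : ℕ} {v : Fin n → ℝ} (hv : Function.Injective v)
    (hk : 1 ≤ k) (hkn : k ≤ n) :
    (Finset.univ.filter fun i => v i ≤ kthSmallest v k).card = k := by
  have h : k - 1 < n := by omega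
  have hmono : StrictMono (v ∘ Tuple.sort v) :=
    (Tuple.monotone_sort v).strictMono_of_injective (hv.comp (Tuple.sort v).injective)
  have : (Finset.univ.filter fun i => v i ≤ kthSmallest v k) =
      (Finset.Iic (⟨k - 1, h⟩ : Fin n)).map (Tuple.sort v).toEmbedding := by
    ext i
    obtain ⟨j, rfl⟩ := (Tuple.sort v).surjective i
    simpa [kthSmallest, h] using hmono.le_iff_le
  rw [this, Finset.card_map, Fin.card_Iic]
  exact Nat.sub_add_cancel hk

lemma ae_injective_of_measure_eq_null {Ω ι β : Type*} [MeasurableSpace Ω] {P : Measure Ω}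
    [Countable ι] {Z : ι → Ω → β} (hdist : ∀ i j, i ≠ j → P {ω | Z i ω = Z j ω} = 0) :
    ∀ᵐ ω ∂P, Function.Injective fun i => Z i ω := by
  refine ae_all_iff.2 fun i => ae_all_iff.2 fun j => ?_
  rcases eq_or_ne i j with rfl | hij
  · exact ae_of_all _ fun _ _ => rfl
  · exact measure_mono_null (fun ω hω => by simpa [hij] using hω) (hdist i j hij)

lemma sum_measure_eq_lintegral_card {Ω ι : Type*} [MeasurableSpace Ω] {P : Measure Ω}
    (s : Finset ι) {p : ι → Ω → Prop} [∀ i ω, Decidable (p i ω)]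
    (hp : ∀ i, MeasurableSet {ω | p i ω}) :
    ∑ i ∈ s, P {ω | p i ω} = ∫⁻ ω, ((s.filter fun i => p i ω).card : ENNReal) ∂P := by
  simp_rw [← lintegral_indicator_one (hp _), Finset.card_filter]
  rw [← lintegral_finsetSum _ fun i _ => measurable_one.indicator (hp i)]
  push_cast
  simp only [Set.indicator_apply, Set.mem_ofPred_eq, Pi.one_apply]

section Exchangeable

variable {Ω : Type*} [MeasurableSpace Ω] {P : Measure Ω} {m : ℕ} {Z : Fin m → Ω → ℝ}

lemma Exchangeable.measure_le_eq_of_perm_invariant (hexch : Exchangeable P Z)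
    (hmeas : ∀ i, Measurable (Z i)) {f : (Fin m → ℝ) → ℝ} (hf : Measurable f)
    (hinv : ∀ v (σ : Equiv.Perm (Fin m)), f (v ∘ σ) = f v) (i j : Fin m) :
    P {ω | Z i ω ≤ f fun l => Z l ω} = P {ω | Z j ω ≤ f fun l => Z l ω} := by
  set S := {v : Fin m → ℝ | v j ≤ f v}
  have hS : MeasurableSet S := measurableSet_le (measurable_pi_apply j) hf
  have hZ : Measurable fun ω l => Z l ω := measurable_pi_lambda _ hmeas
  have hZσ : Measurable fun ω l => Z (Equiv.swap i j l) ω :=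
    measurable_pi_lambda _ fun l => hmeas _
  calc P {ω | Z i ω ≤ f fun l => Z l ω}
      = P ((fun ω l => Z (Equiv.swap i j l) ω) ⁻¹' S) := by
        congr 1; ext ω
        simp only [S, Set.mem_preimage, Set.mem_ofPred_eq, Equiv.swap_apply_right]
        rw [← hinv _ (Equiv.swap i j)]
        rfl
    _ = P ((fun ω l => Z l ω) ⁻¹' S) := by
        rw [← Measure.map_apply hZσ hS, hexch, Measure.map_apply hZ hS]

lemma Exchangeable.measure_le_kthSmallest [IsProbabilityMeasure P] (hexch : Exchangeable P Z)
    (hmeas : ∀ i, Measurable (Z i)) (hdist : ∀ i j, i ≠ j → P {ω | Z i ω = Z j ω} = 0)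
    {k : ℕ} (hk : 1 ≤ k) (hkm : k ≤ m) (i : Fin m) :
    P {ω | Z i ω ≤ kthSmallest (fun l => Z l ω) k} = k / m := by
  have hcount : ∀ᵐ ω ∂P,
      ((Finset.univ.filter fun j => Z j ω ≤ kthSmallest (fun l => Z l ω) k).card : ENNReal) = k :=
    (ae_injective_of_measure_eq_null hdist).mono fun ω hω => by
      rw [card_filter_le_kthSmallest hω hk hkm]
  have hsum : m * P {ω | Z i ω ≤ kthSmallest (fun l => Z l ω) k} = k :=
    calc m * P {ω | Z i ω ≤ kthSmallest (fun l => Z l ω) k}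
        = ∑ j, P {ω | Z j ω ≤ kthSmallest (fun l => Z l ω) k} := by
          simp [hexch.measure_le_eq_of_perm_invariant hmeas (measurable_kthSmallest k)
            (fun v σ => kthSmallest_comp_perm v σ k) _ i]
      _ = ∫⁻ ω, ((Finset.univ.filter fun j => Z j ω ≤ kthSmallest (fun l => Z l ω) k).card
            : ENNReal) ∂P :=
          sum_measure_eq_lintegral_card _ fun j => measurableSet_le (hmeas j)
            ((measurable_kthSmallest k).comp (measurable_pi_lambda _ hmeas))
      _ = k := by simp [lintegral_congr_ae hcount]
  exact (ENNReal.eq_div_iff (by simp; omega) (by simp)).2 hsum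

end Exchangeable

theorem quantiles_exchangeability_upper
    {Ω : Type*} [MeasurableSpace Ω] (P : Measure Ω) [IsProbabilityMeasure P]
    (n : ℕ) (hn : 1 ≤ n) (Z : Fin n → Ω → ℝ) (hmeas : ∀ i, Measurable (Z i))
    (hexch : Exchangeable P Z)
    (hdist : ∀ i j, i ≠ j → P {ω | Z i ω = Z j ω} = 0)
    (α : ℝ) (hα : α ∈ Set.Ioc (0 : ℝ) 1) :
    (P {ω | Z ⟨n - 1, by omega⟩ ω ≤
        kthSmallest (fun i => Z i ω) ⌈α * (n : ℝ)⌉₊}).toReal ≤ α + 1 / n := by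
  obtain ⟨hα0, hα1⟩ := hα
  have hn0 : (0 : ℝ) < n := by exact_mod_cast hn
  have hk : 1 ≤ ⌈α * n⌉₊ := Nat.one_le_iff_ne_zero.2 (by positivity)
  have hkn : ⌈α * n⌉₊ ≤ n := Nat.ceil_le.2 (mul_le_of_le_one_left hn0.le hα1)
  rw [hexch.measure_le_kthSmallest hmeas hdist hk hkn, ENNReal.toReal_div,
    ENNReal.toReal_natCast, ENNReal.toReal_natCast, div_le_iff₀ hn0, add_mul,
    one_div_mul_cancel hn0.ne']
  exact (Nat.ceil_lt_add_one (by positivity)).le
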